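/- Consider the recurrence u_j^{(m+1),α} = ν ∑_k ∂²_k(u_j^{m,α}) − ∂¹_j(p^{m,α}) + f_j^{m,α} − ∑_{p≤m} ∑_{μ≤α} binom(m,p) binom(α,μ) ∑_k u_k^{p,μ} ∂¹_k(u_j^{(m−p),(α−μ)}), where ∂^s_k increments the k-th entry of the multi-index by s. If u, p, f are smooth functions of (t,x) satisfying the Navier–Stokes momentum equation ∂_t u_j + ∑_k u_k ∂_{x_k} u_j = ν Δu_j − ∂_{x_j} p + f_j, then their derivative arrays u_j^{m,α} = ∂_t^m ∂_x^α u_j(t₀,x₀), p^{m,α} = ∂_t^m ∂_x^α p(t₀,x₀), f_j^{m,α} = ∂_t^m ∂_x^α f_j(t₀,x₀) satisfy this recurrence for all m, α. -/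

import Mathlib

open Finset

/-- Spatial partial derivative `∂_{x_k}` of a function of `(t, x) : ℝ × ℝ^N`. -/
noncomputable def pdx {N : ℕ} (k : Fin N) (g : ℝ × (Fin N → ℝ) → ℝ) :
    ℝ × (Fin N → ℝ) → ℝ :=
  fun q => fderiv ℝ (fun y => g (q.1, y)) q.2 (Pi.single k 1)

/-- Iterated spatial partial derivative `∂_x^α` for a multi-index `α`. -/
noncomputable def mpdx {N : ℕ} (α : Fin N → ℕ) (g : ℝ × (Fin N → ℝ) → ℝ) :
    ℝ × (Fin N → ℝ) → ℝ :=
  ((List.finRange N).foldr (fun k h => (pdx k)^[α k] ∘ h) id) g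

/-- Time derivative `∂_t` of a function of `(t, x) : ℝ × ℝ^N`. -/
noncomputable def pdt {N : ℕ} (g : ℝ × (Fin N → ℝ) → ℝ) : ℝ × (Fin N → ℝ) → ℝ :=
  fun q => deriv (fun s => g (s, q.2)) q.1

/-- The jet `∂_t^m ∂_x^α g (t₀, x₀)`. -/
noncomputable def jet {N : ℕ} (g : ℝ × (Fin N → ℝ) → ℝ) (m : ℕ) (α : Fin N → ℕ)
    (q₀ : ℝ × (Fin N → ℝ)) : ℝ :=
  (pdt^[m] (mpdx α g)) q₀


section NSlib
abbrev EE (N : ℕ) := ℝ × (Fin N → ℝ)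

/-- Directional derivative. -/
noncomputable def Dd {N : ℕ} (v : EE N) (g : EE N → ℝ) : EE N → ℝ := fun q => fderiv ℝ g q v

variable {N : ℕ}

def vx (k : Fin N) : EE N := (0, Pi.single k 1)
def vt : EE N := ((1 : ℝ), (0 : Fin N → ℝ))

lemma Dd_contDiff {g : EE N → ℝ} (hg : ContDiff ℝ (⊤ : ℕ∞) g) (v : EE N) : ContDiff ℝ (⊤ : ℕ∞) (Dd v g) :=
  (hg.fderiv_right (by simp)).clm_apply contDiff_const

lemma diffAt {g : EE N → ℝ} (hg : ContDiff ℝ (⊤ : ℕ∞) g) (q : EE N) : DifferentiableAt ℝ g q :=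
  (hg.differentiable (by simp)).differentiableAt

lemma Dd_add {g h : EE N → ℝ} (hg : ContDiff ℝ (⊤ : ℕ∞) g) (hh : ContDiff ℝ (⊤ : ℕ∞) h) (v : EE N) :
    Dd v (fun q => g q + h q) = fun q => Dd v g q + Dd v h q := by
  funext q
  simp only [Dd, fderiv_fun_add (diffAt hg q) (diffAt hh q)]
  rfl

lemma Dd_const_mul {g : EE N → ℝ} (hg : ContDiff ℝ (⊤ : ℕ∞) g) (c : ℝ) (v : EE N) :
    Dd v (fun q => c * g q) = fun q => c * Dd v g q := by
  funext q
  simp only [Dd, fderiv_const_mul (diffAt hg q)]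
  rfl

lemma Dd_sub {g h : EE N → ℝ} (hg : ContDiff ℝ (⊤ : ℕ∞) g) (hh : ContDiff ℝ (⊤ : ℕ∞) h) (v : EE N) :
    Dd v (fun q => g q - h q) = fun q => Dd v g q - Dd v h q := by
  funext q
  simp only [Dd, fderiv_fun_sub (diffAt hg q) (diffAt hh q)]
  rfl

lemma Dd_mul {g h : EE N → ℝ} (hg : ContDiff ℝ (⊤ : ℕ∞) g) (hh : ContDiff ℝ (⊤ : ℕ∞) h) (v : EE N) :
    Dd v (fun q => g q * h q) = fun q => Dd v g q * h q + g q * Dd v h q := by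
  funext q
  simp only [Dd, fderiv_fun_mul (diffAt hg q) (diffAt hh q)]
  simp [mul_comm]
  ring

lemma Dd_sum {ι : Type*} (s : Finset ι) (g : ι → EE N → ℝ) (hg : ∀ i, ContDiff ℝ (⊤ : ℕ∞) (g i))
    (v : EE N) : Dd v (fun q => ∑ i ∈ s, g i q) = fun q => ∑ i ∈ s, Dd v (g i) q := by
  classical
  induction s using Finset.induction with
  | empty => funext q; simp [Dd]
  | insert a s hnot ih =>
    have : (fun q => ∑ i ∈ insert a s, g i q) = fun q => g a q + ∑ i ∈ s, g i q := by
      funext q; rw [Finset.sum_insert hnot]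
    rw [this, Dd_add (hg a) (by exact ContDiff.sum fun i _ => hg i), ih]
    funext q; rw [Finset.sum_insert hnot]

lemma Dd_comm {g : EE N → ℝ} (hg : ContDiff ℝ (⊤ : ℕ∞) g) (v w : EE N) :
    Dd v (Dd w g) = Dd w (Dd v g) := by
  funext q
  have hsym : IsSymmSndFDerivAt ℝ g q := hg.contDiffAt.isSymmSndFDerivAt (by rw [minSmoothness_of_isRCLikeNormedField]; exact WithTop.coe_le_coe.mpr le_top)
  have key : ∀ a b : EE N, Dd a (Dd b g) q = fderiv ℝ (fderiv ℝ g) q a b := by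
    intro a b
    have hdf : DifferentiableAt ℝ (fderiv ℝ g) q :=
      ((hg.fderiv_right (m := (⊤ : ℕ∞)) (by simp)).differentiable (by simp)).differentiableAt
    show fderiv ℝ (fun y => fderiv ℝ g y b) q a = _
    rw [fderiv_clm_apply hdf (differentiableAt_const b)]
    simp
  rw [key v w, key w v, hsym v w]

lemma pascal_sum (x y : ℕ → ℝ) (n : ℕ) :
    (∑ k ∈ range (n+1), (n.choose k : ℝ) * (x (k+1) * y (n-k)))
    + (∑ k ∈ range (n+1), (n.choose k : ℝ) * (x k * y (n-k+1)))
    = ∑ k ∈ range (n+2), ((n+1).choose k : ℝ) * (x k * y (n+1-k)) := by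
  have hR : ∑ k ∈ range (n+2), ((n+1).choose k : ℝ) * (x k * y (n+1-k))
      = (∑ k ∈ range (n+1), ((n+1).choose (k+1) : ℝ) * (x (k+1) * y (n-k)))
        + (x 0 * y (n+1)) := by
    rw [Finset.sum_range_succ' (fun k => ((n+1).choose k : ℝ) * (x k * y (n+1-k)))]
    simp
  have hL2 : (∑ k ∈ range (n+1), (n.choose k : ℝ) * (x k * y (n-k+1)))
      = (∑ k ∈ range (n+1), (n.choose (k+1) : ℝ) * (x (k+1) * y (n-k)))
        + (x 0 * y (n+1)) := by
    have e1 : (∑ k ∈ range (n+1), (n.choose k : ℝ) * (x k * y (n-k+1)))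
        = ∑ k ∈ range (n+2), (n.choose k : ℝ) * (x k * y (n+1-k)) := by
      rw [Finset.sum_range_succ (fun k => (n.choose k : ℝ) * (x k * y (n+1-k)))]
      rw [Nat.choose_succ_self]
      simp only [Nat.cast_zero, zero_mul, add_zero]
      exact Finset.sum_congr rfl fun k hk => by
        rw [Finset.mem_range] at hk
        congr 3
        omega
    rw [e1, Finset.sum_range_succ' (fun k => (n.choose k : ℝ) * (x k * y (n+1-k)))]
    simp
  rw [hR, hL2, ← add_assoc, ← Finset.sum_add_distrib]
  congr 1
  exact Finset.sum_congr rfl fun k _ => by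
    rw [Nat.choose_succ_succ]
    push_cast
    ring

-- iterates
lemma DdIter_contDiff {g : EE N → ℝ} (hg : ContDiff ℝ (⊤ : ℕ∞) g) (v : EE N) (n : ℕ) :
    ContDiff ℝ (⊤ : ℕ∞) ((Dd v)^[n] g) := by
  induction n generalizing g with
  | zero => simpa
  | succ n ih => rw [Function.iterate_succ_apply]; exact ih (Dd_contDiff hg v)

lemma DdIter_add {g h : EE N → ℝ} (hg : ContDiff ℝ (⊤ : ℕ∞) g) (hh : ContDiff ℝ (⊤ : ℕ∞) h) (v : EE N)
    (n : ℕ) : (Dd v)^[n] (fun q => g q + h q) = fun q => (Dd v)^[n] g q + (Dd v)^[n] h q := by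
  induction n generalizing g h with
  | zero => simp
  | succ n ih =>
    rw [Function.iterate_succ_apply, Function.iterate_succ_apply, Function.iterate_succ_apply,
      Dd_add hg hh]
    exact ih (Dd_contDiff hg v) (Dd_contDiff hh v)

lemma DdIter_const_mul {g : EE N → ℝ} (hg : ContDiff ℝ (⊤ : ℕ∞) g) (c : ℝ) (v : EE N) (n : ℕ) :
    (Dd v)^[n] (fun q => c * g q) = fun q => c * (Dd v)^[n] g q := by
  induction n generalizing g with
  | zero => simp
  | succ n ih =>
    rw [Function.iterate_succ_apply, Function.iterate_succ_apply, Dd_const_mul hg]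
    exact ih (Dd_contDiff hg v)

lemma DdIter_sub {g h : EE N → ℝ} (hg : ContDiff ℝ (⊤ : ℕ∞) g) (hh : ContDiff ℝ (⊤ : ℕ∞) h) (v : EE N)
    (n : ℕ) : (Dd v)^[n] (fun q => g q - h q) = fun q => (Dd v)^[n] g q - (Dd v)^[n] h q := by
  induction n generalizing g h with
  | zero => simp
  | succ n ih =>
    rw [Function.iterate_succ_apply, Function.iterate_succ_apply, Function.iterate_succ_apply,
      Dd_sub hg hh]
    exact ih (Dd_contDiff hg v) (Dd_contDiff hh v)

lemma DdIter_sum {ι : Type*} (s : Finset ι) (g : ι → EE N → ℝ) (hg : ∀ i, ContDiff ℝ (⊤ : ℕ∞) (g i))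
    (v : EE N) (n : ℕ) :
    (Dd v)^[n] (fun q => ∑ i ∈ s, g i q) = fun q => ∑ i ∈ s, (Dd v)^[n] (g i) q := by
  induction n generalizing g with
  | zero => simp
  | succ n ih =>
    rw [Function.iterate_succ_apply, Dd_sum s g hg]
    rw [ih _ (fun i => Dd_contDiff (hg i) v)]
    funext q
    exact Finset.sum_congr rfl fun i _ => by rw [Function.iterate_succ_apply]

lemma DdIter_comm {g : EE N → ℝ} (hg : ContDiff ℝ (⊤ : ℕ∞) g) (v w : EE N) (n : ℕ) :
    Dd v ((Dd w)^[n] g) = (Dd w)^[n] (Dd v g) := by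
  induction n generalizing g with
  | zero => simp
  | succ n ih =>
    rw [Function.iterate_succ_apply, Function.iterate_succ_apply, ih (Dd_contDiff hg w),
      Dd_comm hg]

-- single-direction Leibniz
lemma DdIter_mul {g h : EE N → ℝ} (hg : ContDiff ℝ (⊤ : ℕ∞) g) (hh : ContDiff ℝ (⊤ : ℕ∞) h) (v : EE N)
    (n : ℕ) : (Dd v)^[n] (fun q => g q * h q) =
      fun q => ∑ k ∈ range (n + 1),
        (n.choose k : ℝ) * ((Dd v)^[k] g q * (Dd v)^[n - k] h q) := by
  induction n with
  | zero => simp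
  | succ n ih =>
    rw [Function.iterate_succ_apply', ih]
    rw [Dd_sum _ _ (fun k =>
      (contDiff_const.mul ((DdIter_contDiff hg v k).mul (DdIter_contDiff hh v (n - k)))))]
    funext q
    have step : ∀ k, Dd v (fun q => (n.choose k : ℝ) *
        ((Dd v)^[k] g q * (Dd v)^[n - k] h q)) q =
        (n.choose k : ℝ) * ((Dd v)^[k+1] g q * (Dd v)^[n-k] h q)
          + (n.choose k : ℝ) * ((Dd v)^[k] g q * (Dd v)^[n-k+1] h q) := by
      intro k
      rw [Dd_const_mul ((DdIter_contDiff hg v k).mul (DdIter_contDiff hh v (n-k))),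
        Dd_mul (DdIter_contDiff hg v k) (DdIter_contDiff hh v (n-k))]
      simp only [Function.iterate_succ_apply']
      ring
    simp only [step]
    rw [Finset.sum_add_distrib]
    exact pascal_sum (fun k => (Dd v)^[k] g q) (fun k => (Dd v)^[k] h q) n

noncomputable def MD (ℓ : List (Fin N)) (α : Fin N → ℕ) (g : EE N → ℝ) : EE N → ℝ :=
  (ℓ.foldr (fun k h => (Dd (vx k))^[α k] ∘ h) id) g

@[simp] lemma MD_nil (α : Fin N → ℕ) (g : EE N → ℝ) : MD [] α g = g := rfl

lemma MD_cons (k : Fin N) (ℓ : List (Fin N)) (α : Fin N → ℕ) (g : EE N → ℝ) :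
    MD (k :: ℓ) α g = (Dd (vx k))^[α k] (MD ℓ α g) := rfl

lemma MD_contDiff {g : EE N → ℝ} (hg : ContDiff ℝ (⊤ : ℕ∞) g) (ℓ : List (Fin N)) (α : Fin N → ℕ) :
    ContDiff ℝ (⊤ : ℕ∞) (MD ℓ α g) := by
  induction ℓ with
  | nil => simpa
  | cons k ℓ ih => rw [MD_cons]; exact DdIter_contDiff ih _ _

lemma MD_congr {α β : Fin N → ℕ} (ℓ : List (Fin N)) (hαβ : ∀ i ∈ ℓ, α i = β i)
    (g : EE N → ℝ) : MD ℓ α g = MD ℓ β g := by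
  induction ℓ with
  | nil => rfl
  | cons k ℓ ih =>
    rw [MD_cons, MD_cons, ih (fun i hi => hαβ i (List.mem_cons_of_mem _ hi)),
      hαβ k List.mem_cons_self]

lemma Dd_MD_comm {g : EE N → ℝ} (hg : ContDiff ℝ (⊤ : ℕ∞) g) (v : EE N) (ℓ : List (Fin N))
    (α : Fin N → ℕ) : Dd v (MD ℓ α g) = MD ℓ α (Dd v g) := by
  induction ℓ generalizing g with
  | nil => rfl
  | cons k ℓ ih =>
    rw [MD_cons, DdIter_comm (MD_contDiff hg ℓ α), ih hg, MD_cons]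

lemma DdIter_MD_comm {g : EE N → ℝ} (hg : ContDiff ℝ (⊤ : ℕ∞) g) (v : EE N) (n : ℕ)
    (ℓ : List (Fin N)) (α : Fin N → ℕ) :
    (Dd v)^[n] (MD ℓ α g) = MD ℓ α ((Dd v)^[n] g) := by
  induction n generalizing g with
  | zero => simp
  | succ n ih =>
    rw [Function.iterate_succ_apply', ih hg, Dd_MD_comm (DdIter_contDiff hg v n),
      Function.iterate_succ_apply']

lemma MD_shift {g : EE N → ℝ} (hg : ContDiff ℝ (⊤ : ℕ∞) g) {ℓ : List (Fin N)} (hnd : ℓ.Nodup)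
    {k : Fin N} (hk : k ∈ ℓ) (α : Fin N → ℕ) (s : ℕ) :
    MD ℓ (α + Pi.single k s) g = MD ℓ α ((Dd (vx k))^[s] g) := by
  induction ℓ with
  | nil => simp at hk
  | cons a ℓ ih =>
    rw [List.nodup_cons] at hnd
    rcases List.mem_cons.1 hk with rfl | hk'
    · -- head = k
      rw [MD_cons, MD_cons]
      have h1 : MD ℓ (α + Pi.single k s) g = MD ℓ α g :=
        MD_congr ℓ (fun i hi => by
          have : i ≠ k := fun h => hnd.1 (h ▸ hi)
          simp [Pi.add_apply, Pi.single_apply, this]) g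
      rw [h1]
      have h2 : (α + Pi.single k s : Fin N → ℕ) k = α k + s := by simp
      rw [h2, Function.iterate_add_apply]
      rw [DdIter_MD_comm hg (vx k) s ℓ α]
    · -- k in tail
      rw [MD_cons, MD_cons, ih hnd.2 hk']
      have : a ≠ k := fun h => hnd.1 (h ▸ hk')
      have h2 : (α + Pi.single k s : Fin N → ℕ) a = α a := by simp [Pi.single_apply, this]
      rw [h2]

lemma MD_add {g h : EE N → ℝ} (hg : ContDiff ℝ (⊤ : ℕ∞) g) (hh : ContDiff ℝ (⊤ : ℕ∞) h)
    (ℓ : List (Fin N)) (α : Fin N → ℕ) :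
    MD ℓ α (fun q => g q + h q) = fun q => MD ℓ α g q + MD ℓ α h q := by
  induction ℓ with
  | nil => rfl
  | cons k ℓ ih =>
    rw [MD_cons, ih, DdIter_add (MD_contDiff hg ℓ α) (MD_contDiff hh ℓ α), MD_cons, MD_cons]

lemma MD_const_mul {g : EE N → ℝ} (hg : ContDiff ℝ (⊤ : ℕ∞) g) (c : ℝ) (ℓ : List (Fin N))
    (α : Fin N → ℕ) : MD ℓ α (fun q => c * g q) = fun q => c * MD ℓ α g q := by
  induction ℓ with
  | nil => rfl
  | cons k ℓ ih =>
    rw [MD_cons, ih, DdIter_const_mul (MD_contDiff hg ℓ α), MD_cons]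

lemma MD_sub {g h : EE N → ℝ} (hg : ContDiff ℝ (⊤ : ℕ∞) g) (hh : ContDiff ℝ (⊤ : ℕ∞) h)
    (ℓ : List (Fin N)) (α : Fin N → ℕ) :
    MD ℓ α (fun q => g q - h q) = fun q => MD ℓ α g q - MD ℓ α h q := by
  induction ℓ with
  | nil => rfl
  | cons k ℓ ih =>
    rw [MD_cons, ih, DdIter_sub (MD_contDiff hg ℓ α) (MD_contDiff hh ℓ α), MD_cons, MD_cons]

lemma MD_sum {ι : Type*} (s : Finset ι) (g : ι → EE N → ℝ) (hg : ∀ i, ContDiff ℝ (⊤ : ℕ∞) (g i))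
    (ℓ : List (Fin N)) (α : Fin N → ℕ) :
    MD ℓ α (fun q => ∑ i ∈ s, g i q) = fun q => ∑ i ∈ s, MD ℓ α (g i) q := by
  induction ℓ with
  | nil => rfl
  | cons k ℓ ih =>
    rw [MD_cons, ih, DdIter_sum s _ (fun i => MD_contDiff (hg i) ℓ α)]
    funext q
    exact Finset.sum_congr rfl fun i _ => by rw [MD_cons]

lemma sum_piFinset_update (k : Fin N) (b : Fin N → ℕ) (hb : b k = 0) (m : ℕ)
    (F : (Fin N → ℕ) → ℝ) :
    ∑ μ ∈ Fintype.piFinset (fun i => range (Function.update b k m i + 1)), F μ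
      = ∑ j ∈ range (m + 1), ∑ μ ∈ Fintype.piFinset (fun i => range (b i + 1)),
          F (Function.update μ k j) := by
  classical
  rw [← Finset.sum_product']
  apply Finset.sum_nbij' (i := fun μ => (μ k, Function.update μ k 0))
    (j := fun p => Function.update p.2 k p.1)
  · intro μ hμ
    rw [Fintype.mem_piFinset] at hμ
    rw [Finset.mem_product]
    constructor
    · have := hμ k
      simpa [Function.update_self] using this
    · rw [Fintype.mem_piFinset]
      intro i
      by_cases hik : i = k
      · subst hik; simp
      · have := hμ i
        simpa [Function.update_of_ne hik] using this
  · intro p hp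
    rw [Finset.mem_product] at hp
    rw [Fintype.mem_piFinset]
    intro i
    by_cases hik : i = k
    · subst hik; simpa [Function.update_self] using hp.1
    · rw [Fintype.mem_piFinset] at hp
      simpa [Function.update_of_ne hik] using hp.2 i
  · intro μ hμ
    simp only [Function.update_idem, Function.update_eq_self]
  · intro p hp
    rw [Finset.mem_product, Fintype.mem_piFinset] at hp
    have hpk : p.2 k = 0 := by have := hp.2 k; rw [hb] at this; simpa using this
    simp only [Function.update_self, Function.update_idem]
    rw [← hpk, Function.update_eq_self]
  · intro μ hμ
    simp only [Function.update_idem, Function.update_eq_self]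

def mask (ℓ : List (Fin N)) (α : Fin N → ℕ) : Fin N → ℕ := fun i => if i ∈ ℓ then α i else 0

lemma mask_cons {k : Fin N} {ℓ : List (Fin N)} (hk : k ∉ ℓ) (α : Fin N → ℕ) :
    mask (k :: ℓ) α = Function.update (mask ℓ α) k (α k) := by
  funext i
  by_cases hik : i = k
  · subst hik; simp [mask, Function.update_self]
  · simp [mask, Function.update_of_ne hik, List.mem_cons, hik]

lemma MD_mul {g h : EE N → ℝ} (hg : ContDiff ℝ (⊤ : ℕ∞) g) (hh : ContDiff ℝ (⊤ : ℕ∞) h)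
    {ℓ : List (Fin N)} (hnd : ℓ.Nodup) (α : Fin N → ℕ) :
    MD ℓ α (fun q => g q * h q) = fun q =>
      ∑ μ ∈ Fintype.piFinset (fun i => range (mask ℓ α i + 1)),
        (∏ i, ((mask ℓ α i).choose (μ i) : ℝ)) *
          (MD ℓ μ g q * MD ℓ (fun i => mask ℓ α i - μ i) h q) := by
  classical
  induction ℓ with
  | nil =>
    have hset : Fintype.piFinset (fun i : Fin N => range (mask [] α i + 1))
        = {fun _ => 0} := by
      ext μ
      simp [Fintype.mem_piFinset, mask, Nat.lt_one_iff, funext_iff]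
    rw [hset]
    funext q
    simp [mask, MD_nil]
  | cons k ℓ ih =>
    rw [List.nodup_cons] at hnd
    have hkℓ : k ∉ ℓ := hnd.1
    rw [MD_cons, ih hnd.2]
    have congG : ∀ (μ' : Fin N → ℕ) (j : ℕ),
        (Dd (vx k))^[j] (MD ℓ μ' g) = MD (k :: ℓ) (Function.update μ' k j) g := by
      intro μ' j
      rw [MD_cons, Function.update_self,
        MD_congr ℓ (fun i hi => (Function.update_of_ne (ne_of_mem_of_not_mem hi hkℓ) j μ').symm) g]
    have congH : ∀ (μ' : Fin N → ℕ) (j : ℕ),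
        (Dd (vx k))^[α k - j] (MD ℓ (fun i => mask ℓ α i - μ' i) h)
          = MD (k :: ℓ) (fun i => mask (k :: ℓ) α i - Function.update μ' k j i) h := by
      intro μ' j
      rw [MD_cons]
      have e1 : mask (k :: ℓ) α k - Function.update μ' k j k = α k - j := by
        simp [mask, Function.update_self]
      rw [e1, MD_congr ℓ (α := fun i => mask ℓ α i - μ' i)
        (β := fun i => mask (k :: ℓ) α i - Function.update μ' k j i)
        (fun i hi => by
          have hik : i ≠ k := ne_of_mem_of_not_mem hi hkℓ
          simp [mask, Function.update_of_ne hik, List.mem_cons, hik]) h]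
    -- expand LHS
    rw [DdIter_sum _ _ (fun μ' => contDiff_const.mul
      ((MD_contDiff hg ℓ μ').mul (MD_contDiff hh ℓ _)))]
    funext q
    rw [mask_cons hkℓ]
    rw [sum_piFinset_update k (mask ℓ α) (by simp [mask, hkℓ]) (α k)]
    rw [Finset.sum_comm]
    apply Finset.sum_congr rfl
    intro μ' hμ'
    have hμ'k : μ' k = 0 := by
      rw [Fintype.mem_piFinset] at hμ'
      have := hμ' k
      simp [mask, hkℓ] at this
      exact this
    rw [show ((Dd (vx k))^[α k] (fun q => (∏ i, ((mask ℓ α i).choose (μ' i) : ℝ)) *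
        (MD ℓ μ' g q * MD ℓ (fun i => mask ℓ α i - μ' i) h q)) q)
      = (∏ i, ((mask ℓ α i).choose (μ' i) : ℝ)) *
        ((Dd (vx k))^[α k] (fun q => MD ℓ μ' g q * MD ℓ (fun i => mask ℓ α i - μ' i) h q) q)
      from congrFun (DdIter_const_mul ((MD_contDiff hg ℓ μ').mul (MD_contDiff hh ℓ _)) _ _ _) q]
    rw [show ((Dd (vx k))^[α k] (fun q => MD ℓ μ' g q * MD ℓ (fun i => mask ℓ α i - μ' i) h q) q)
      = ∑ j ∈ range (α k + 1), ((α k).choose j : ℝ) *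
          ((Dd (vx k))^[j] (MD ℓ μ' g) q * (Dd (vx k))^[α k - j] (MD ℓ (fun i => mask ℓ α i - μ' i) h) q)
      from congrFun (DdIter_mul (MD_contDiff hg ℓ μ') (MD_contDiff hh ℓ _) _ _) q]
    rw [Finset.mul_sum]
    apply Finset.sum_congr rfl
    intro j hj
    rw [congG μ' j, congH μ' j]
    -- coefficient identity
    have coeff : (∏ i, ((Function.update (mask ℓ α) k (α k)) i |>.choose
          (Function.update μ' k j i) : ℝ))
        = ((α k).choose j : ℝ) * ∏ i, ((mask ℓ α i).choose (μ' i) : ℝ) := by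
      rw [← Finset.prod_erase_mul Finset.univ _ (Finset.mem_univ k),
        ← Finset.prod_erase_mul Finset.univ
          (fun i => ((mask ℓ α i).choose (μ' i) : ℝ)) (Finset.mem_univ k)]
      rw [Function.update_self, Function.update_self]
      have : (mask ℓ α k).choose (μ' k) = 1 := by
        simp [mask, hkℓ, hμ'k]
      rw [this]
      have eprod : (∏ i ∈ Finset.univ.erase k,
            (((Function.update (mask ℓ α) k (α k)) i).choose (Function.update μ' k j i) : ℝ))
          = ∏ i ∈ Finset.univ.erase k, ((mask ℓ α i).choose (μ' i) : ℝ) :=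
        Finset.prod_congr rfl (fun i hi => by
          have hik : i ≠ k := (Finset.mem_erase.1 hi).1
          rw [Function.update_of_ne hik, Function.update_of_ne hik])
      rw [eprod]
      push_cast
      ring
    rw [mask_cons hkℓ] at *
    rw [coeff]
    ring

lemma pdx_eq {g : EE N → ℝ} (hg : ContDiff ℝ (⊤ : ℕ∞) g) (k : Fin N) : pdx k g = Dd (vx k) g := by
  funext q
  have h1 : HasFDerivAt (fun y : Fin N → ℝ => ((q.1 : ℝ), y))
      (ContinuousLinearMap.inr ℝ ℝ (Fin N → ℝ)) q.2 := hasFDerivAt_prodMk_right q.1 q.2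
  have h2 : HasFDerivAt g (fderiv ℝ g q) (q.1, q.2) := by
    rw [Prod.mk.eta]; exact (diffAt hg q).hasFDerivAt
  have h3 : HasFDerivAt (fun y : Fin N → ℝ => g (q.1, y))
      ((fderiv ℝ g q).comp (ContinuousLinearMap.inr ℝ ℝ (Fin N → ℝ))) q.2 := h2.comp q.2 h1
  show fderiv ℝ (fun y => g (q.1, y)) q.2 (Pi.single k 1) = fderiv ℝ g q (vx k)
  rw [h3.fderiv]
  rfl

lemma pdt_eq {g : EE N → ℝ} (hg : ContDiff ℝ (⊤ : ℕ∞) g) : pdt g = Dd vt g := by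
  funext q
  have h1 : HasFDerivAt (fun s : ℝ => (s, q.2))
      (ContinuousLinearMap.inl ℝ ℝ (Fin N → ℝ)) q.1 := hasFDerivAt_prodMk_left q.1 q.2
  have h2 : HasFDerivAt g (fderiv ℝ g q) (q.1, q.2) := by
    rw [Prod.mk.eta]; exact (diffAt hg q).hasFDerivAt
  have h3 : HasFDerivAt (fun s : ℝ => g (s, q.2))
      ((fderiv ℝ g q).comp (ContinuousLinearMap.inl ℝ ℝ (Fin N → ℝ))) q.1 := h2.comp q.1 h1
  show deriv (fun s => g (s, q.2)) q.1 = fderiv ℝ g q vt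
  rw [h3.hasDerivAt.deriv]
  rfl

lemma pdxIter_eq {g : EE N → ℝ} (hg : ContDiff ℝ (⊤ : ℕ∞) g) (k : Fin N) (n : ℕ) :
    (pdx k)^[n] g = (Dd (vx k))^[n] g := by
  induction n generalizing g with
  | zero => simp
  | succ n ih =>
    rw [Function.iterate_succ_apply, Function.iterate_succ_apply, pdx_eq hg,
      ih (Dd_contDiff hg (vx k))]

lemma pdtIter_eq {g : EE N → ℝ} (hg : ContDiff ℝ (⊤ : ℕ∞) g) (m : ℕ) :
    pdt^[m] g = (Dd vt)^[m] g := by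
  induction m generalizing g with
  | zero => simp
  | succ m ih =>
    rw [Function.iterate_succ_apply, Function.iterate_succ_apply, pdt_eq hg,
      ih (Dd_contDiff hg vt)]

lemma mpdx_eq {g : EE N → ℝ} (hg : ContDiff ℝ (⊤ : ℕ∞) g) (α : Fin N → ℕ) :
    mpdx α g = MD (List.finRange N) α g := by
  suffices h : ∀ ℓ : List (Fin N),
      ((ℓ.foldr (fun k h => (pdx k)^[α k] ∘ h) id) g) = MD ℓ α g from h _
  intro ℓ
  induction ℓ with
  | nil => rw [MD_nil]; rfl
  | cons k ℓ ih =>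
    rw [List.foldr_cons, MD_cons]
    show (pdx k)^[α k] ((ℓ.foldr (fun k h => (pdx k)^[α k] ∘ h) id) g) = _
    rw [ih, pdxIter_eq (MD_contDiff hg ℓ α)]

lemma jet_eq {g : EE N → ℝ} (hg : ContDiff ℝ (⊤ : ℕ∞) g) (m : ℕ) (α : Fin N → ℕ) (q₀ : EE N) :
    jet g m α q₀ = (Dd vt)^[m] (MD (List.finRange N) α g) q₀ := by
  show (pdt^[m] (mpdx α g)) q₀ = _
  rw [mpdx_eq hg, pdtIter_eq (MD_contDiff hg _ α)]


lemma jetD0 {g : EE N → ℝ} (hg : ContDiff ℝ (⊤ : ℕ∞) g) (m : ℕ) (α : Fin N → ℕ) (q₀ : EE N) :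
    (Dd vt)^[m] (MD (List.finRange N) α g) q₀ = jet g m α q₀ := (jet_eq hg m α q₀).symm

lemma jetD2 {g : EE N → ℝ} (hg : ContDiff ℝ (⊤ : ℕ∞) g) (m : ℕ) (α : Fin N → ℕ) (k : Fin N)
    (q₀ : EE N) :
    (Dd vt)^[m] (MD (List.finRange N) α (Dd (vx k) (Dd (vx k) g))) q₀
      = jet g m (α + Pi.single k 2) q₀ := by
  rw [jet_eq hg, MD_shift hg (List.nodup_finRange N) (List.mem_finRange k) α 2]
  have h2 : (Dd (vx k))^[2] g = Dd (vx k) (Dd (vx k) g) := by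
    rw [show (2 : ℕ) = 1 + 1 from rfl, Function.iterate_add_apply, Function.iterate_one]
  rw [h2]

lemma jetD1 {g : EE N → ℝ} (hg : ContDiff ℝ (⊤ : ℕ∞) g) (m : ℕ) (α : Fin N → ℕ) (k : Fin N)
    (q₀ : EE N) :
    (Dd vt)^[m] (MD (List.finRange N) α (Dd (vx k) g)) q₀
      = jet g m (α + Pi.single k 1) q₀ := by
  rw [jet_eq hg, MD_shift hg (List.nodup_finRange N) (List.mem_finRange k) α 1,
    Function.iterate_one]

lemma maskFR (α : Fin N → ℕ) : mask (List.finRange N) α = α :=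
  funext fun i => if_pos (List.mem_finRange i)

lemma jet_mul_expand {g h : EE N → ℝ} (hg : ContDiff ℝ (⊤ : ℕ∞) g) (hh : ContDiff ℝ (⊤ : ℕ∞) h)
    (m : ℕ) (α : Fin N → ℕ) :
    (Dd vt)^[m] (MD (List.finRange N) α (fun q => g q * h q)) = fun q₀ =>
      ∑ μ ∈ Fintype.piFinset (fun i => range (α i + 1)),
        (∏ i, ((α i).choose (μ i) : ℝ)) *
          ∑ pp ∈ range (m + 1), (m.choose pp : ℝ) *
            ((Dd vt)^[pp] (MD (List.finRange N) μ g) q₀ *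
             (Dd vt)^[m - pp] (MD (List.finRange N) (fun i => α i - μ i) h) q₀) := by
  rw [MD_mul hg hh (List.nodup_finRange N) α, maskFR α]
  rw [DdIter_sum _ _ (fun μ => contDiff_const.mul
    ((MD_contDiff hg _ _).mul (MD_contDiff hh _ _))) vt m]
  funext q
  apply Finset.sum_congr rfl
  intro μ _
  rw [show ((Dd vt)^[m] (fun q => (∏ i, ((α i).choose (μ i) : ℝ)) *
      (MD (List.finRange N) μ g q * MD (List.finRange N) (fun i => α i - μ i) h q)) q)
    = (∏ i, ((α i).choose (μ i) : ℝ)) *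
      ((Dd vt)^[m] (fun q => MD (List.finRange N) μ g q *
        MD (List.finRange N) (fun i => α i - μ i) h q) q)
    from congrFun (DdIter_const_mul ((MD_contDiff hg _ _).mul (MD_contDiff hh _ _)) _ vt m) q]
  rw [show ((Dd vt)^[m] (fun q => MD (List.finRange N) μ g q *
        MD (List.finRange N) (fun i => α i - μ i) h q) q)
    = ∑ pp ∈ range (m + 1), (m.choose pp : ℝ) *
        ((Dd vt)^[pp] (MD (List.finRange N) μ g) q *
         (Dd vt)^[m - pp] (MD (List.finRange N) (fun i => α i - μ i) h) q)
    from congrFun (DdIter_mul (MD_contDiff hg _ _) (MD_contDiff hh _ _) vt m) q]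

lemma JD_combo {A B C D : EE N → ℝ} (hA : ContDiff ℝ (⊤ : ℕ∞) A) (hB : ContDiff ℝ (⊤ : ℕ∞) B)
    (hC : ContDiff ℝ (⊤ : ℕ∞) C) (hD : ContDiff ℝ (⊤ : ℕ∞) D) (c : ℝ) (m : ℕ) (ℓ : List (Fin N))
    (α : Fin N → ℕ) :
    (Dd vt)^[m] (MD ℓ α (fun q => (c * A q - B q + C q) - D q)) = fun q =>
      (c * (Dd vt)^[m] (MD ℓ α A) q - (Dd vt)^[m] (MD ℓ α B) q
        + (Dd vt)^[m] (MD ℓ α C) q) - (Dd vt)^[m] (MD ℓ α D) q := by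
  have s1 : ContDiff ℝ (⊤ : ℕ∞) (fun q => c * A q) := contDiff_const.mul hA
  have s2 : ContDiff ℝ (⊤ : ℕ∞) (fun q => c * A q - B q) := s1.sub hB
  have s3 : ContDiff ℝ (⊤ : ℕ∞) (fun q => c * A q - B q + C q) := s2.add hC
  have h1 := MD_sub s3 hD ℓ α
  have h2 := MD_add s2 hC ℓ α
  have h3 := MD_sub s1 hB ℓ α
  have h4 := MD_const_mul hA c ℓ α
  have mAll : MD ℓ α (fun q => (c * A q - B q + C q) - D q) = fun q =>
      (c * MD ℓ α A q - MD ℓ α B q + MD ℓ α C q) - MD ℓ α D q := by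
    simp only [h1, h2, h3, h4]
  rw [mAll]
  have mA := MD_contDiff hA ℓ α
  have mB := MD_contDiff hB ℓ α
  have mC := MD_contDiff hC ℓ α
  have mD := MD_contDiff hD ℓ α
  have m1 : ContDiff ℝ (⊤ : ℕ∞) (fun q => c * MD ℓ α A q) := contDiff_const.mul mA
  have m2 : ContDiff ℝ (⊤ : ℕ∞) (fun q => c * MD ℓ α A q - MD ℓ α B q) := m1.sub mB
  have m3 : ContDiff ℝ (⊤ : ℕ∞) (fun q => c * MD ℓ α A q - MD ℓ α B q + MD ℓ α C q) := m2.add mC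
  have t1 := DdIter_sub m3 mD vt m
  have t2 := DdIter_add m2 mC vt m
  have t3 := DdIter_sub m1 mB vt m
  have t4 := DdIter_const_mul mA c vt m
  simp only [t1, t2, t3, t4]

end NSlib

/-- The derivative arrays of smooth solutions of the Navier–Stokes momentum equation
satisfy the recurrence relation
`u_j^{(m+1),α} = ν ∑_k ∂²_k(u_j^{m,α}) − ∂¹_j(p^{m,α}) + f_j^{m,α}
  − ∑_{p≤m} ∑_{μ≤α} binom(m,p) binom(α,μ) ∑_k u_k^{p,μ} ∂¹_k(u_j^{(m−p),(α−μ)})`. -/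
theorem stmt19 (N : ℕ) (ν : ℝ)
    (u : Fin N → ℝ × (Fin N → ℝ) → ℝ) (p : ℝ × (Fin N → ℝ) → ℝ)
    (f : Fin N → ℝ × (Fin N → ℝ) → ℝ)
    (hu : ∀ j, ContDiff ℝ (⊤ : ℕ∞) (u j)) (hp : ContDiff ℝ (⊤ : ℕ∞) p)
    (hf : ∀ j, ContDiff ℝ (⊤ : ℕ∞) (f j))
    (hmom : ∀ q j, pdt (u j) q + ∑ k, u k q * pdx k (u j) q =
      ν * ∑ k, pdx k (pdx k (u j)) q - pdx j p q + f j q)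
    (q₀ : ℝ × (Fin N → ℝ)) :
    ∀ (m : ℕ) (α : Fin N → ℕ) (j : Fin N),
      jet (u j) (m + 1) α q₀ =
        ν * (∑ k, jet (u j) m (α + Pi.single k 2) q₀)
        - jet p m (α + Pi.single j 1) q₀
        + jet (f j) m α q₀
        - ∑ pp ∈ Finset.range (m + 1),
            ∑ μ ∈ Fintype.piFinset (fun i => Finset.range (α i + 1)),
              (Nat.choose m pp : ℝ) * (∏ i, (Nat.choose (α i) (μ i) : ℝ)) *
                ∑ k, jet (u k) pp μ q₀ *
                  jet (u j) (m - pp) ((fun i => α i - μ i) + Pi.single k 1) q₀ := by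
  intro m α j
  classical
  have hmomf : Dd vt (u j) = fun q =>
      (ν * (∑ k, Dd (vx k) (Dd (vx k) (u j)) q) - Dd (vx j) p q + f j q)
      - ∑ k, u k q * Dd (vx k) (u j) q := by
    funext q
    have e1 : ∀ k : Fin N, pdx k (u j) q = Dd (vx k) (u j) q :=
      fun k => congrFun (pdx_eq (hu j) k) q
    have e2 : ∀ k : Fin N, pdx k (pdx k (u j)) q = Dd (vx k) (Dd (vx k) (u j)) q := fun k => by
      rw [pdx_eq (hu j) k]
      exact congrFun (pdx_eq (Dd_contDiff (hu j) (vx k)) k) q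
    have e3 : pdx j p q = Dd (vx j) p q := congrFun (pdx_eq hp j) q
    have e0 : pdt (u j) q = Dd vt (u j) q := congrFun (pdt_eq (hu j)) q
    have hm := hmom q j
    rw [e0, e3] at hm
    simp only [e2, e1] at hm
    linarith
  have hA : ContDiff ℝ (⊤ : ℕ∞) (fun q : EE N => ∑ k, Dd (vx k) (Dd (vx k) (u j)) q) :=
    ContDiff.sum fun k _ => Dd_contDiff (Dd_contDiff (hu j) (vx k)) (vx k)
  have hD4 : ContDiff ℝ (⊤ : ℕ∞) (fun q : EE N => ∑ k, u k q * Dd (vx k) (u j) q) :=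
    ContDiff.sum fun k _ => (hu k).mul (Dd_contDiff (hu j) (vx k))
  rw [jet_eq (hu j) (m+1) α q₀, Function.iterate_succ_apply,
    Dd_MD_comm (hu j) vt (List.finRange N) α, hmomf]
  have combo := JD_combo hA (Dd_contDiff hp (vx j)) (hf j) hD4 ν m (List.finRange N) α
  simp only [combo]
  -- first piece
  have P1a := MD_sum Finset.univ (fun k => Dd (vx k) (Dd (vx k) (u j)))
      (fun k => Dd_contDiff (Dd_contDiff (hu j) (vx k)) (vx k)) (List.finRange N) α
  have P1b := DdIter_sum Finset.univ
      (fun k => MD (List.finRange N) α (Dd (vx k) (Dd (vx k) (u j))))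
      (fun k => MD_contDiff (Dd_contDiff (Dd_contDiff (hu j) (vx k)) (vx k)) _ _) vt m
  have P1c : ∀ k : Fin N,
      (Dd vt)^[m] (MD (List.finRange N) α (Dd (vx k) (Dd (vx k) (u j)))) q₀
        = jet (u j) m (α + Pi.single k 2) q₀ := fun k => jetD2 (hu j) m α k q₀
  have P2 := jetD1 hp m α j q₀
  have P3 := jetD0 (hf j) m α q₀
  have P4a := MD_sum Finset.univ (fun k => fun q => u k q * Dd (vx k) (u j) q)
      (fun k => (hu k).mul (Dd_contDiff (hu j) (vx k))) (List.finRange N) α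
  have P4b := DdIter_sum Finset.univ
      (fun k => MD (List.finRange N) α (fun q => u k q * Dd (vx k) (u j) q))
      (fun k => MD_contDiff ((hu k).mul (Dd_contDiff (hu j) (vx k))) _ _) vt m
  have P4c : ∀ k : Fin N,
      (Dd vt)^[m] (MD (List.finRange N) α (fun q => u k q * Dd (vx k) (u j) q)) q₀
        = ∑ μ ∈ Fintype.piFinset (fun i => range (α i + 1)),
            (∏ i, ((α i).choose (μ i) : ℝ)) *
              ∑ pp ∈ range (m + 1), (m.choose pp : ℝ) *
                (jet (u k) pp μ q₀ *
                  jet (u j) (m - pp) ((fun i => α i - μ i) + Pi.single k 1) q₀) := by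
    intro k
    rw [congrFun (jet_mul_expand (hu k) (Dd_contDiff (hu j) (vx k)) m α) q₀]
    refine Finset.sum_congr rfl fun μ _ => ?_
    congr 1
    refine Finset.sum_congr rfl fun pp _ => ?_
    rw [jetD0 (hu k) pp μ q₀, jetD1 (hu j) (m - pp) (fun i => α i - μ i) k q₀]
  simp only [P1a, P1b, P1c, P2, P3, P4a, P4b, P4c]
  -- final algebra
  have e1 : ∀ F : Fin N → (Fin N → ℕ) → ℕ → ℝ,
      (∑ k : Fin N, ∑ μ ∈ Fintype.piFinset (fun i => range (α i + 1)),
        ∑ pp ∈ range (m + 1), F k μ pp)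
      = ∑ pp ∈ range (m + 1), ∑ μ ∈ Fintype.piFinset (fun i => range (α i + 1)),
          ∑ k : Fin N, F k μ pp := by
    intro F
    calc (∑ k : Fin N, ∑ μ ∈ Fintype.piFinset (fun i => range (α i + 1)),
          ∑ pp ∈ range (m + 1), F k μ pp)
        = ∑ k : Fin N, ∑ pp ∈ range (m + 1),
            ∑ μ ∈ Fintype.piFinset (fun i => range (α i + 1)), F k μ pp :=
          Finset.sum_congr rfl fun k _ => Finset.sum_comm
      _ = ∑ pp ∈ range (m + 1), ∑ k : Fin N,
            ∑ μ ∈ Fintype.piFinset (fun i => range (α i + 1)), F k μ pp := Finset.sum_comm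
      _ = ∑ pp ∈ range (m + 1), ∑ μ ∈ Fintype.piFinset (fun i => range (α i + 1)),
            ∑ k : Fin N, F k μ pp :=
          Finset.sum_congr rfl fun pp _ => Finset.sum_comm
  have hsum : (∑ k : Fin N, ∑ μ ∈ Fintype.piFinset (fun i => range (α i + 1)),
        (∏ i, ((α i).choose (μ i) : ℝ)) *
          ∑ pp ∈ range (m + 1), (m.choose pp : ℝ) *
            (jet (u k) pp μ q₀ *
              jet (u j) (m - pp) ((fun i => α i - μ i) + Pi.single k 1) q₀))
      = ∑ pp ∈ Finset.range (m + 1),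
          ∑ μ ∈ Fintype.piFinset (fun i => Finset.range (α i + 1)),
            (Nat.choose m pp : ℝ) * (∏ i, (Nat.choose (α i) (μ i) : ℝ)) *
              ∑ k, jet (u k) pp μ q₀ *
                jet (u j) (m - pp) ((fun i => α i - μ i) + Pi.single k 1) q₀ := by
    simp only [Finset.mul_sum]
    refine Eq.trans (e1 (fun k μ pp => (∏ i, ((α i).choose (μ i) : ℝ)) * ((m.choose pp : ℝ) *
      (jet (u k) pp μ q₀ *
        jet (u j) (m - pp) ((fun i => α i - μ i) + Pi.single k 1) q₀)))) ?_
    refine Finset.sum_congr rfl fun pp _ => Finset.sum_congr rfl fun μ _ =>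
      Finset.sum_congr rfl fun k _ => by ring
  rw [hsum]
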